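/- For 1 < α ≤ 2 and natural number n ≥ 1, the tail sum of Grünwald coefficients satisfies ∑_{k=n}^∞ G^α_{k+1} = -G^{α-1}_n, and these quantities are nonnegative; moreover ∑_{n=1}^∞ (-G^{α-1}_n) = 1, so (-G^{α-1}_n)_{n≥1} defines a probability distribution on the positive integers. -/

import Mathlib

/-!
Write `β = α - 1 ∈ (0, 1]`. Pascal's rule `G^α_{k+1} = G^β_{k+1} - G^β_k` makes the tail partial
sums telescope to `G^β_{n+m} - G^β_n`, and likewise `∑_{n<m} -G^β_{n+1} = 1 - G^{β-1}_m`. For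
`γ = β - 1 ∈ (-1, 0]` one has `G^γ_m = ∏_{i<m} (1 - (1 + γ)/(i + 1)) ≤ exp (-(1 + γ) H_m)`, which tends
to `0` with the harmonic numbers `H_m`; by Pascal's rule so does `G^β_m`. The summands are
nonnegative because `G^α_{k+1} = -α/(k+1) G^{α-1}_k` and `G^γ_k ≥ 0` for `γ ≤ 0`, so convergence of
the partial sums gives the sums.
-/

open MeasureTheory Real Filter

/-- Grünwald coefficient `G^α_k = (-1)^k * binom(α,k)`. -/
noncomputable def grunwald (α : ℝ) (k : ℕ) : ℝ :=
  (-1 : ℝ) ^ k * ((∏ i ∈ Finset.range k, (α - i)) / (Nat.factorial k))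

open Finset

lemma prod_range_succ_sub_natCast (α : ℝ) (k : ℕ) :
    ∏ i ∈ range (k + 1), (α - i) = α * ∏ i ∈ range k, (α - 1 - i) := by
  rw [prod_range_succ', mul_comm, Nat.cast_zero, sub_zero]
  congr 1
  exact prod_congr rfl fun i _ => by push_cast; ring

lemma grunwald_zero (α : ℝ) : grunwald α 0 = 1 := by
  simp [grunwald]

lemma grunwald_succ (α : ℝ) (k : ℕ) :
    grunwald α (k + 1) = -α / (k + 1) * grunwald (α - 1) k := by
  unfold grunwald
  rw [prod_range_succ_sub_natCast, Nat.factorial_succ]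
  push_cast
  field_simp
  ring

lemma grunwald_succ_eq_sub (α : ℝ) (k : ℕ) :
    grunwald α (k + 1) = grunwald (α - 1) (k + 1) - grunwald (α - 1) k := by
  unfold grunwald
  rw [prod_range_succ_sub_natCast, prod_range_succ, Nat.factorial_succ]
  push_cast
  field_simp
  ring

lemma grunwald_eq_prod_div (γ : ℝ) (k : ℕ) :
    grunwald γ k = ∏ i ∈ range k, ((i - γ) / (i + 1)) := by
  have hsign : (-1 : ℝ) ^ k = ∏ _i ∈ range k, (-1 : ℝ) := by simp
  have hfact : (k.factorial : ℝ) = ∏ i ∈ range k, ((i : ℝ) + 1) := by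
    rw [← prod_range_add_one_eq_factorial]
    push_cast
    rfl
  rw [grunwald, prod_div_distrib, ← mul_div_assoc, hsign, hfact, ← prod_mul_distrib]
  congr 1
  exact prod_congr rfl fun i _ => by ring

lemma grunwald_nonneg {γ : ℝ} (hγ : γ ≤ 0) (k : ℕ) : 0 ≤ grunwald γ k := by
  rw [grunwald_eq_prod_div]
  exact prod_nonneg fun i _ => div_nonneg (by linarith [i.cast_nonneg (α := ℝ)]) (by positivity)

lemma grunwald_le_exp_neg_mul_harmonic {γ : ℝ} (hγ : γ ≤ 0) (m : ℕ) :
    grunwald γ m ≤ exp (-(1 + γ) * ∑ i ∈ range m, 1 / ((i : ℝ) + 1)) := by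
  rw [grunwald_eq_prod_div, mul_sum, exp_sum]
  refine prod_le_prod (fun i _ => ?_) fun i _ => ?_
  · exact div_nonneg (by linarith [i.cast_nonneg (α := ℝ)]) (by positivity)
  · have hfactor : ((i : ℝ) - γ) / (i + 1) = -(1 + γ) * (1 / (i + 1)) + 1 := by
      field_simp
      ring
    rw [hfactor]
    exact add_one_le_exp _

lemma tendsto_grunwald_of_nonpos {γ : ℝ} (hγ1 : -1 < γ) (hγ0 : γ ≤ 0) :
    Tendsto (grunwald γ) atTop (nhds 0) := by
  have hbound : Tendsto (fun m => exp (-(1 + γ) * ∑ i ∈ range m, 1 / ((i : ℝ) + 1)))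
      atTop (nhds 0) :=
    tendsto_exp_atBot.comp <|
      tendsto_sum_range_one_div_nat_succ_atTop.const_mul_atTop_of_neg (by linarith)
  exact squeeze_zero (grunwald_nonneg hγ0) (grunwald_le_exp_neg_mul_harmonic hγ0) hbound

lemma tendsto_grunwald_of_tendsto_sub_one {α : ℝ}
    (h : Tendsto (grunwald (α - 1)) atTop (nhds 0)) :
    Tendsto (grunwald α) atTop (nhds 0) := by
  have hdiff := ((tendsto_add_atTop_iff_nat 1).mpr h).sub h
  rw [sub_zero] at hdiff
  exact (tendsto_add_atTop_iff_nat 1).mp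
    (hdiff.congr fun k => (grunwald_succ_eq_sub α k).symm)

lemma grunwald_nonpos {β : ℝ} (hβ0 : 0 ≤ β) (hβ1 : β ≤ 1) {n : ℕ} (hn : n ≠ 0) :
    grunwald β n ≤ 0 := by
  obtain ⟨k, rfl⟩ := Nat.exists_eq_succ_of_ne_zero hn
  rw [grunwald_succ]
  exact mul_nonpos_of_nonpos_of_nonneg (div_nonpos_of_nonpos_of_nonneg (by linarith)
    (by positivity)) (grunwald_nonneg (by linarith) k)

lemma grunwald_add_two_nonneg {α : ℝ} (hα1 : 1 ≤ α) (hα2 : α ≤ 2) (k : ℕ) :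
    0 ≤ grunwald α (k + 2) := by
  rw [grunwald_succ]
  exact mul_nonneg_of_nonpos_of_nonpos (div_nonpos_of_nonpos_of_nonneg (by linarith)
    (by positivity)) (grunwald_nonpos (by linarith) (by linarith) k.succ_ne_zero)

lemma sum_range_grunwald (α : ℝ) (n m : ℕ) :
    ∑ k ∈ range m, grunwald α (n + k + 1) = grunwald (α - 1) (m + n) - grunwald (α - 1) n := by
  have htelescope := sum_range_sub (fun k => grunwald (α - 1) (n + k)) m
  rw [add_zero] at htelescope
  rw [add_comm m n, ← htelescope]
  exact sum_congr rfl fun k _ => grunwald_succ_eq_sub α (n + k)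

lemma hasSum_grunwald_tail {α : ℝ} (hα1 : 1 < α) (hα2 : α ≤ 2) {n : ℕ} (hn : n ≠ 0) :
    HasSum (fun k => grunwald α (n + k + 1)) (-grunwald (α - 1) n) := by
  have hnonneg (k : ℕ) : 0 ≤ grunwald α (n + k + 1) := by
    obtain ⟨j, rfl⟩ := Nat.exists_eq_succ_of_ne_zero hn
    simpa only [Nat.succ_eq_add_one, add_right_comm _ 1 k] using
      grunwald_add_two_nonneg hα1.le hα2 (j + k)
  have hlim := (tendsto_add_atTop_iff_nat n).mpr <| tendsto_grunwald_of_tendsto_sub_one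
    (α := α - 1) (tendsto_grunwald_of_nonpos (by linarith) (by linarith))
  rw [hasSum_iff_tendsto_nat_of_nonneg hnonneg, ← zero_sub]
  simpa only [sum_range_grunwald] using hlim.sub_const (grunwald (α - 1) n)

lemma hasSum_neg_grunwald_succ {β : ℝ} (hβ0 : 0 < β) (hβ1 : β ≤ 1) :
    HasSum (fun n => -grunwald β (n + 1)) 1 := by
  have hnonneg (n : ℕ) : 0 ≤ -grunwald β (n + 1) :=
    neg_nonneg.mpr (grunwald_nonpos hβ0.le hβ1 n.succ_ne_zero)
  have hpartial (m : ℕ) : ∑ n ∈ range m, -grunwald β (n + 1) = 1 - grunwald (β - 1) m := by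
    simpa only [sum_neg_distrib, zero_add, add_zero, grunwald_zero, neg_sub] using
      congrArg Neg.neg (sum_range_grunwald β 0 m)
  rw [hasSum_iff_tendsto_nat_of_nonneg hnonneg]
  simpa only [hpartial, sub_zero] using
    (tendsto_grunwald_of_nonpos (by linarith) (by linarith)).const_sub 1

theorem grunwald_tail_prob (α : ℝ) (hα1 : 1 < α) (hα2 : α ≤ 2) :
    (∀ n : ℕ, 1 ≤ n →
      (∑' k : ℕ, grunwald α (n + k + 1)) = -grunwald (α - 1) n ∧
      0 ≤ -grunwald (α - 1) n) ∧
    ∑' n : ℕ, -grunwald (α - 1) (n + 1) = 1 := by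
  refine ⟨fun n hn => ⟨?_, ?_⟩, ?_⟩
  · exact (hasSum_grunwald_tail hα1 hα2 (Nat.one_le_iff_ne_zero.mp hn)).tsum_eq
  · exact neg_nonneg.mpr
      (grunwald_nonpos (by linarith) (by linarith) (Nat.one_le_iff_ne_zero.mp hn))
  · exact (hasSum_neg_grunwald_succ (by linarith) (by linarith)).tsum_eq
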